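/- Let X be a path-connected topological space, σ : X → X a homeomorphism with σ ∘ σ = id_X, and x ∈ X a point with σ(x) ≠ x. Let Γ be the set of endpoint-fixed homotopy classes of paths in X starting at x and ending at either x or σ(x), with multiplication defined as follows: for classes γ, δ ∈ Γ, if γ ends at x then γ·δ is the class of the concatenation of γ followed by δ, and if γ ends at σ(x) then γ·δ is the class of the concatenation of γ followed by σ ∘ δ. Then this multiplication makes Γ a group, the classes of loops based at x form a subgroup canonically isomorphic to the fundamental group π₁(X, x), and the endpoint map Γ → ℤ/2ℤ (sending classes ending at x to 0 and classes ending at σ(x) to 1) is a surjective group homomorphism with kernel π₁(X, x); that is, there is a short exact sequence 1 → π₁(X, x) → Γ → ℤ/2ℤ → 1. -/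

import Mathlib

/-! An element of `Γ` is a path class `γ` from `x` to `σ^ε x` with `ε ∈ ℤ/2ℤ`, and the product is
`(ε, γ) · (η, δ) = (ε + η, γ · σ^ε δ)`; the inverse of `γ` ending at `σ x` is `σ (γ⁻¹)`, which
again runs from `σ (σ x) = x` to `σ x`. Associativity and the inverse laws come from functoriality
of `σ` on path classes together with `σ ∘ σ = id`; the latter holds only up to transporting the
endpoints along `σ (σ y) = y`, so the proofs consist of moving these transports around. -/

open scoped ContinuousMap

/-- The set `Γ` of endpoint-fixed homotopy classes of paths in `X` starting at `x` and
ending at either `x` or `σ x`. -/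
abbrev Gamma (X : Type*) [TopologicalSpace X] (σ : X → X) (x : X) : Type _ :=
  Path.Homotopic.Quotient x x ⊕ Path.Homotopic.Quotient x (σ x)

/-- Transport of a homotopy class of paths along an equality of endpoints. -/
def castQ {X : Type*} [TopologicalSpace X] {a b b' : X} (h : b = b')
    (q : Path.Homotopic.Quotient a b) : Path.Homotopic.Quotient a b' :=
  h ▸ q

/-- The multiplication on `Γ`: if `γ` ends at `x`, then `γ·δ` is the concatenation of `γ`
followed by `δ`; if `γ` ends at `σ x`, then `γ·δ` is the concatenation of `γ` followed by
`σ ∘ δ`. -/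
noncomputable def gmul {X : Type*} [TopologicalSpace X] (σ : X ≃ₜ X)
    (hσ : ∀ y, σ (σ y) = y) (x : X) :
    Gamma X σ x → Gamma X σ x → Gamma X σ x
  | Sum.inl γ, Sum.inl δ => Sum.inl (Path.Homotopic.Quotient.trans γ δ)
  | Sum.inl γ, Sum.inr δ => Sum.inr (Path.Homotopic.Quotient.trans γ δ)
  | Sum.inr γ, Sum.inl δ => Sum.inr (Path.Homotopic.Quotient.trans γ (Path.Homotopic.Quotient.map δ (σ : C(X, X))))
  | Sum.inr γ, Sum.inr δ => Sum.inl (Path.Homotopic.Quotient.trans γ (castQ (hσ x) (Path.Homotopic.Quotient.map δ (σ : C(X, X)))))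

/-- The endpoint map `Γ → ℤ/2ℤ`, sending classes of paths ending at `x` to `0` and classes
of paths ending at `σ x` to `1`. -/
def ep (X : Type*) [TopologicalSpace X] (σ : X → X) (x : X) :
    Gamma X σ x → ZMod 2 :=
  Sum.elim (fun _ => 0) (fun _ => 1)

namespace Path.Homotopic.Quotient

variable {X Y : Type*} [TopologicalSpace X] [TopologicalSpace Y] {a b c : X}

theorem map_trans (f : C(X, Y)) (p : Path.Homotopic.Quotient a b)
    (q : Path.Homotopic.Quotient b c) : (p.trans q).map f = (p.map f).trans (q.map f) := by
  induction p using Path.Homotopic.Quotient.ind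
  induction q using Path.Homotopic.Quotient.ind
  exact congrArg mk (Path.map_trans _ _ f.continuous)

theorem map_refl (f : C(X, Y)) (a : X) : (refl a).map f = refl (f a) := rfl

theorem cast_trans {a' b' c' : X} (p : Path.Homotopic.Quotient a b)
    (q : Path.Homotopic.Quotient b c) (ha : a' = a) (hb : b' = b) (hc : c' = c) :
    (p.trans q).cast ha hc = (p.cast ha hb).trans (q.cast hb hc) := by
  subst ha hb hc; simp

theorem cast_refl {a' : X} (h h' : a' = a) : (refl a).cast h h' = refl a' := by
  subst h; rfl

theorem cast_trans_right {c' : X} (p : Path.Homotopic.Quotient a b)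
    (q : Path.Homotopic.Quotient b c) (h : c' = c) :
    (p.trans q).cast rfl h = p.trans (q.cast rfl h) := by
  subst h; simp

theorem cast_trans_eq_trans_cast {b' : X} (p : Path.Homotopic.Quotient a b)
    (q : Path.Homotopic.Quotient b' c) (h : b' = b) :
    (p.cast rfl h).trans q = p.trans (q.cast h.symm rfl) := by
  subst h; simp

theorem map_eq_cast_of_forall_eq {f : C(X, X)} (hf : ∀ y, f y = y)
    (p : Path.Homotopic.Quotient a b) : p.map f = p.cast (hf a) (hf b) := by
  obtain rfl : f = ContinuousMap.id X := ContinuousMap.ext hf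
  induction p using Path.Homotopic.Quotient.ind
  rfl

theorem map_map_of_involutive {f : C(X, X)} (hf : ∀ y, f (f y) = y)
    (p : Path.Homotopic.Quotient a b) : (p.map f).map f = p.cast (hf a) (hf b) := by
  rw [← map_comp]
  exact map_eq_cast_of_forall_eq hf p

end Path.Homotopic.Quotient

theorem castQ_eq_cast {X : Type*} [TopologicalSpace X] {a b b' : X} (h : b = b')
    (q : Path.Homotopic.Quotient a b) : castQ h q = q.cast rfl h.symm := by
  subst h; simp [castQ]

section Endpoint

variable {X : Type*} [TopologicalSpace X] (σ : X → X) (x : X)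

theorem ep_surjective [PathConnectedSpace X] : Function.Surjective (ep X σ x) := by
  intro n
  fin_cases n
  · exact ⟨Sum.inl (Path.Homotopic.Quotient.refl x), rfl⟩
  · exact ⟨Sum.inr (.mk (PathConnectedSpace.somePath x (σ x))), rfl⟩

theorem ep_eq_zero_iff (a : Gamma X σ x) : ep X σ x a = 0 ↔ a ∈ Set.range Sum.inl := by
  rcases a with a | a <;> simp [ep]

end Endpoint

section Gamma

open Path.Homotopic.Quotient

variable {X : Type*} [TopologicalSpace X] (σ : X ≃ₜ X) (hσ : ∀ y, σ (σ y) = y) (x : X)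

def ginv : Gamma X σ x → Gamma X σ x
  | Sum.inl γ => Sum.inl γ.symm
  | Sum.inr γ => Sum.inr ((γ.symm.map (σ : C(X, X))).cast (hσ x).symm rfl)

theorem gmul_assoc (a b c : Gamma X σ x) :
    gmul σ hσ x (gmul σ hσ x a b) c = gmul σ hσ x a (gmul σ hσ x b c) := by
  rcases a with a | a <;> rcases b with b | b <;> rcases c with c | c <;>
    simp only [gmul, castQ_eq_cast, map_trans, map_cast, trans_assoc,
      map_map_of_involutive (f := (σ : C(X, X))) hσ, Path.Homotopic.Quotient.cast_cast,
      cast_trans_eq_trans_cast, cast_trans_right]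

theorem one_gmul (a : Gamma X σ x) : gmul σ hσ x (Sum.inl (refl x)) a = a := by
  rcases a with a | a <;> simp only [gmul, refl_trans]

theorem gmul_one (a : Gamma X σ x) : gmul σ hσ x a (Sum.inl (refl x)) = a := by
  rcases a with a | a
  · exact congrArg Sum.inl (trans_refl a)
  · exact congrArg Sum.inr (trans_refl a)

theorem ginv_gmul (a : Gamma X σ x) : gmul σ hσ x (ginv σ hσ x a) a = Sum.inl (refl x) := by
  rcases a with a | a
  · exact congrArg Sum.inl (symm_trans a)
  · simp only [gmul, ginv, castQ_eq_cast]
    rw [← cast_trans, ← map_trans, symm_trans, map_refl, cast_refl]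

theorem gmul_ginv (a : Gamma X σ x) : gmul σ hσ x a (ginv σ hσ x a) = Sum.inl (refl x) := by
  rcases a with a | a
  · exact congrArg Sum.inl (trans_symm a)
  · simp only [gmul, ginv, castQ_eq_cast, map_cast,
      map_map_of_involutive (f := (σ : C(X, X))) hσ, Path.Homotopic.Quotient.cast_cast, cast_rfl_rfl]
    exact congrArg Sum.inl (trans_symm a)

theorem ep_gmul (a b : Gamma X σ x) :
    ep X σ x (gmul σ hσ x a b) = ep X σ x a + ep X σ x b := by
  rcases a with a | a <;> rcases b with b | b <;> rfl

/-- Mathlib multiplies in `π₁` in the order of composition of morphisms (`p * q = q.trans p`),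
so loops enter `Γ` through inversion. -/
theorem inl_toPath_inv_mul (a b : FundamentalGroup X x) :
    (Sum.inl (a * b)⁻¹.toPath : Gamma X σ x) =
      gmul σ hσ x (Sum.inl a⁻¹.toPath) (Sum.inl b⁻¹.toPath) := by
  rw [mul_inv_rev]; rfl

end Gamma

theorem gamma_group_extension_general (X : Type*) [TopologicalSpace X] [PathConnectedSpace X]
    (σ : X ≃ₜ X) (hσ : ∀ y, σ (σ y) = y) (x : X) :
    -- `gmul` is a group law on `Γ`, with identity a class of a loop at `x`
    (∃ (one : Gamma X σ x) (inv : Gamma X σ x → Gamma X σ x),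
      (∀ a b c : Gamma X σ x,
        gmul σ hσ x (gmul σ hσ x a b) c = gmul σ hσ x a (gmul σ hσ x b c)) ∧
      (∀ a : Gamma X σ x, gmul σ hσ x one a = a) ∧
      (∀ a : Gamma X σ x, gmul σ hσ x a one = a) ∧
      (∀ a : Gamma X σ x, gmul σ hσ x (inv a) a = one) ∧
      (∀ a : Gamma X σ x, gmul σ hσ x a (inv a) = one) ∧
      one = Sum.inl (⟦Path.refl x⟧ : Path.Homotopic.Quotient x x)) ∧
    -- the classes of loops based at `x` form a subgroup canonically isomorphic to `π₁(X,x)`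
    (∃ j : FundamentalGroup X x → Gamma X σ x,
      Function.Injective j ∧
      Set.range j = Set.range (Sum.inl : Path.Homotopic.Quotient x x → Gamma X σ x) ∧
      (∀ a b : FundamentalGroup X x, j (a * b) = gmul σ hσ x (j a) (j b))) ∧
    -- the endpoint map is a surjective homomorphism with kernel the classes of loops
    Function.Surjective (ep X σ x) ∧
    (∀ a b : Gamma X σ x, ep X σ x (gmul σ hσ x a b) = ep X σ x a + ep X σ x b) ∧
    (∀ a : Gamma X σ x, ep X σ x a = 0 ↔
      a ∈ Set.range (Sum.inl : Path.Homotopic.Quotient x x → Gamma X σ x)) := by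
  refine ⟨⟨Sum.inl (Path.Homotopic.Quotient.refl x), ginv σ hσ x, gmul_assoc σ hσ x,
      one_gmul σ hσ x, gmul_one σ hσ x, ginv_gmul σ hσ x, gmul_ginv σ hσ x, rfl⟩,
    ⟨fun a => Sum.inl a⁻¹.toPath, Sum.inl_injective.comp inv_injective,
      inv_surjective.range_comp _, inl_toPath_inv_mul σ hσ x⟩,
    ep_surjective σ x, ep_gmul σ hσ x, ep_eq_zero_iff σ x⟩

/-- Let `X` be a path-connected space, `σ : X → X` a homeomorphism with `σ ∘ σ = id`, and
`x` a point with `σ x ≠ x`.  Then the multiplication `gmul` makes `Γ` a group, the classes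
of loops based at `x` form a subgroup canonically isomorphic to `π₁(X, x)`, and the endpoint
map `Γ → ℤ/2ℤ` is a surjective homomorphism with kernel `π₁(X, x)`; i.e. there is a short
exact sequence `1 → π₁(X, x) → Γ → ℤ/2ℤ → 1`. -/
theorem gamma_group_extension (X : Type*) [TopologicalSpace X] [PathConnectedSpace X]
    (σ : X ≃ₜ X) (hσ : ∀ y, σ (σ y) = y) (x : X) (hx : σ x ≠ x) :
    -- `gmul` is a group law on `Γ`, with identity a class of a loop at `x`
    (∃ (one : Gamma X σ x) (inv : Gamma X σ x → Gamma X σ x),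
      (∀ a b c : Gamma X σ x,
        gmul σ hσ x (gmul σ hσ x a b) c = gmul σ hσ x a (gmul σ hσ x b c)) ∧
      (∀ a : Gamma X σ x, gmul σ hσ x one a = a) ∧
      (∀ a : Gamma X σ x, gmul σ hσ x a one = a) ∧
      (∀ a : Gamma X σ x, gmul σ hσ x (inv a) a = one) ∧
      (∀ a : Gamma X σ x, gmul σ hσ x a (inv a) = one) ∧
      one = Sum.inl (⟦Path.refl x⟧ : Path.Homotopic.Quotient x x)) ∧
    -- the classes of loops based at `x` form a subgroup canonically isomorphic to `π₁(X,x)`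
    (∃ j : FundamentalGroup X x → Gamma X σ x,
      Function.Injective j ∧
      Set.range j = Set.range (Sum.inl : Path.Homotopic.Quotient x x → Gamma X σ x) ∧
      (∀ a b : FundamentalGroup X x, j (a * b) = gmul σ hσ x (j a) (j b))) ∧
    -- the endpoint map is a surjective homomorphism with kernel the classes of loops
    Function.Surjective (ep X σ x) ∧
    (∀ a b : Gamma X σ x, ep X σ x (gmul σ hσ x a b) = ep X σ x a + ep X σ x b) ∧
    (∀ a : Gamma X σ x, ep X σ x a = 0 ↔
      a ∈ Set.range (Sum.inl : Path.Homotopic.Quotient x x → Gamma X σ x)) :=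
  gamma_group_extension_general X σ hσ x
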